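/- Let D be a Hermitian n×n complex matrix in block form D = [[A, V],[V*, B]], where A is k×k, B is m×m (k + m = n), and ‖V‖ ≤ 1/2. Let ε > 0 and suppose that B has no eigenvalues in the open interval (−2ε, 2ε). Then B is invertible and C_ε(A − V·B⁻¹·V*) ≤ C_ε(D). -/

import Mathlib

/-!
For a Hermitian `M`, the number of eigenvalues in `(-ε, ε)` is the largest dimension of a
subspace on which `‖M u‖ < ε ‖u‖` for all `u ≠ 0`: the span of the corresponding eigenvectors
is one, and any such subspace meets the span of the remaining eigenvectors, where
`‖M u‖ ≥ ε ‖u‖`, only in `0`. With `S = A - V B⁻¹ V*` one has `D (x, -B⁻¹ V* x) = (S x, 0)`,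
so the map `x ↦ (x, -B⁻¹ V* x)`, which does not decrease norms, carries such a subspace for `S`
to one for `D` of the same dimension.
-/

open Matrix

/-- Number of eigenvalues (with multiplicity) of a Hermitian matrix in the open
interval `(a, b)`. -/
noncomputable def eigCountIoo {n : Type*} [Fintype n] [DecidableEq n]
    (M : Matrix n n ℂ) (a b : ℝ) : ℕ :=
  if hM : M.IsHermitian then Nat.card {i : n // hM.eigenvalues i ∈ Set.Ioo a b} else 0

/-- The operator (spectral) norm of a matrix, i.e. the norm of the induced operator
between Euclidean spaces. -/
noncomputable def matNorm {m n : Type*} [Fintype m] [Fintype n] [DecidableEq n]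
    (M : Matrix m n ℂ) : ℝ :=
  ‖LinearMap.toContinuousLinearMap (Matrix.toEuclideanLin M)‖

open scoped InnerProductSpace

namespace Matrix.IsHermitian

variable {𝕜 n : Type*} [RCLike 𝕜] [Fintype n] [DecidableEq n] {M : Matrix n n 𝕜}
  (hM : M.IsHermitian)

lemma toEuclideanLin_eigenvectorBasis (i : n) :
    toEuclideanLin M (hM.eigenvectorBasis i) = (hM.eigenvalues i : 𝕜) • hM.eigenvectorBasis i := by
  rw [toLpLin_apply, hM.mulVec_eigenvectorBasis, RCLike.real_smul_eq_coe_smul (K := 𝕜)]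
  rfl

lemma inner_eigenvectorBasis_toEuclideanLin (i : n) (x : EuclideanSpace 𝕜 n) :
    ⟪hM.eigenvectorBasis i, toEuclideanLin M x⟫_𝕜 =
      hM.eigenvalues i * ⟪hM.eigenvectorBasis i, x⟫_𝕜 := by
  rw [← isSymmetric_toEuclideanLin_iff.mpr hM, toEuclideanLin_eigenvectorBasis, inner_smul_left,
    RCLike.conj_ofReal]

lemma norm_toEuclideanLin_sq (x : EuclideanSpace 𝕜 n) :
    ‖toEuclideanLin M x‖ ^ 2 = ∑ i, hM.eigenvalues i ^ 2 * ‖⟪hM.eigenvectorBasis i, x⟫_𝕜‖ ^ 2 := by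
  simp_rw [← hM.eigenvectorBasis.sum_sq_norm_inner_right, inner_eigenvectorBasis_toEuclideanLin,
    norm_mul, mul_pow, RCLike.norm_ofReal, sq_abs]

lemma mul_norm_le_norm_toEuclideanLin {ε : ℝ} {x : EuclideanSpace 𝕜 n}
    (hx : ∀ i, hM.eigenvalues i ∈ Set.Ioo (-ε) ε → ⟪hM.eigenvectorBasis i, x⟫_𝕜 = 0) :
    ε * ‖x‖ ≤ ‖toEuclideanLin M x‖ := by
  rcases lt_or_ge ε 0 with hε | hε
  · exact (mul_nonpos_of_nonpos_of_nonneg hε.le (norm_nonneg x)).trans (norm_nonneg _)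
  have hsq : (ε * ‖x‖) ^ 2 ≤ ‖toEuclideanLin M x‖ ^ 2 := by
    rw [mul_pow, ← hM.eigenvectorBasis.sum_sq_norm_inner_right, Finset.mul_sum,
      hM.norm_toEuclideanLin_sq]
    refine Finset.sum_le_sum fun i _ => ?_
    by_cases hi : hM.eigenvalues i ∈ Set.Ioo (-ε) ε
    · simp [hx i hi]
    · rw [Set.mem_Ioo, ← abs_lt, not_lt] at hi
      exact mul_le_mul_of_nonneg_right (sq_le_sq.2 (by rwa [abs_of_nonneg hε])) (by positivity)
  exact (abs_le_of_sq_le_sq' hsq (norm_nonneg _)).2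

lemma norm_toEuclideanLin_lt_mul_norm {ε : ℝ} {x : EuclideanSpace 𝕜 n}
    (hx : ∀ i, hM.eigenvalues i ∉ Set.Ioo (-ε) ε → ⟪hM.eigenvectorBasis i, x⟫_𝕜 = 0)
    (hx0 : x ≠ 0) :
    ‖toEuclideanLin M x‖ < ε * ‖x‖ := by
  obtain ⟨i, hi⟩ : ∃ i, ⟪hM.eigenvectorBasis i, x⟫_𝕜 ≠ 0 := by
    by_contra! h
    have hnorm : ‖x‖ ^ 2 = 0 := by
      simp [← hM.eigenvectorBasis.sum_sq_norm_inner_right, h]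
    exact hx0 (by simpa using hnorm)
  have hεi : hM.eigenvalues i ∈ Set.Ioo (-ε) ε := by_contra fun h => hi (hx i h)
  have hε : 0 ≤ ε := by linarith [hεi.1, hεi.2]
  have hsq : ‖toEuclideanLin M x‖ ^ 2 < (ε * ‖x‖) ^ 2 := by
    rw [hM.norm_toEuclideanLin_sq, mul_pow, ← hM.eigenvectorBasis.sum_sq_norm_inner_right,
      Finset.mul_sum]
    refine Finset.sum_lt_sum (fun j _ => ?_) ⟨i, Finset.mem_univ _, ?_⟩
    · by_cases hj : hM.eigenvalues j ∈ Set.Ioo (-ε) ε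
      · exact mul_le_mul_of_nonneg_right (sq_lt_sq' hj.1 hj.2).le (by positivity)
      · simp [hx j hj]
    · exact mul_lt_mul_of_pos_right (sq_lt_sq' hεi.1 hεi.2) (by positivity)
  exact lt_of_pow_lt_pow_left₀ 2 (by positivity) hsq

lemma finrank_le_card_eigenvalues_mem_Ioo {ε : ℝ} (U : Submodule 𝕜 (EuclideanSpace 𝕜 n))
    (hU : ∀ u ∈ U, u ≠ 0 → ‖toEuclideanLin M u‖ < ε * ‖u‖) :
    Module.finrank 𝕜 U ≤ Fintype.card {i // hM.eigenvalues i ∈ Set.Ioo (-ε) ε} := by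
  let coeffs : U →ₗ[𝕜] {i // hM.eigenvalues i ∈ Set.Ioo (-ε) ε} → 𝕜 :=
    LinearMap.pi fun i => (innerₛₗ 𝕜 (hM.eigenvectorBasis i)).comp U.subtype
  have hinj : Function.Injective coeffs := by
    refine (injective_iff_map_eq_zero coeffs).2 fun u hu => ?_
    by_contra hu0
    have hlow := hU u u.2 (by exact_mod_cast hu0)
    refine (hM.mul_norm_le_norm_toEuclideanLin fun i hi => ?_).not_gt hlow
    exact congrFun hu ⟨i, hi⟩
  simpa using LinearMap.finrank_le_finrank_of_injective hinj

lemma exists_finrank_eq_card_eigenvalues_mem_Ioo (ε : ℝ) :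
    ∃ U : Submodule 𝕜 (EuclideanSpace 𝕜 n),
      Module.finrank 𝕜 U = Fintype.card {i // hM.eigenvalues i ∈ Set.Ioo (-ε) ε} ∧
      ∀ u ∈ U, u ≠ 0 → ‖toEuclideanLin M u‖ < ε * ‖u‖ := by
  let b : {i // hM.eigenvalues i ∈ Set.Ioo (-ε) ε} → EuclideanSpace 𝕜 n :=
    fun i => hM.eigenvectorBasis i
  refine ⟨Submodule.span 𝕜 (Set.range b), ?_, fun u hu hu0 => ?_⟩
  · exact finrank_span_eq_card
      (hM.eigenvectorBasis.orthonormal.linearIndependent.comp _ Subtype.val_injective)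
  · refine hM.norm_toEuclideanLin_lt_mul_norm (fun i hi => ?_) hu0
    have hspan : Submodule.span 𝕜 (Set.range b) ≤
        LinearMap.ker (innerₛₗ 𝕜 (hM.eigenvectorBasis i)) := by
      rw [Submodule.span_le]
      rintro _ ⟨j, rfl⟩
      exact hM.eigenvectorBasis.orthonormal.2 fun hij => hi (hij ▸ j.2)
    exact hspan hu

lemma card_eigenvalues_mem_Ioo_le_of_norm_le {n' : Type*} [Fintype n'] [DecidableEq n']
    {M' : Matrix n' n' 𝕜} (hM' : M'.IsHermitian) {ε : ℝ}
    (G : EuclideanSpace 𝕜 n →ₗ[𝕜] EuclideanSpace 𝕜 n') (hG : ∀ x, ‖x‖ ≤ ‖G x‖)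
    (hM'G : ∀ x, ‖toEuclideanLin M' (G x)‖ ≤ ‖toEuclideanLin M x‖) :
    Fintype.card {i // hM.eigenvalues i ∈ Set.Ioo (-ε) ε} ≤
      Fintype.card {i // hM'.eigenvalues i ∈ Set.Ioo (-ε) ε} := by
  have hGinj : Function.Injective G := (injective_iff_map_eq_zero G).2 fun x hx =>
    norm_le_zero_iff.1 (by simpa [hx] using hG x)
  obtain ⟨U, hUdim, hU⟩ := hM.exists_finrank_eq_card_eigenvalues_mem_Ioo ε
  rw [← hUdim, (Submodule.equivMapOfInjective G hGinj U).finrank_eq]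
  refine hM'.finrank_le_card_eigenvalues_mem_Ioo _ ?_
  rintro _ ⟨x, hx, rfl⟩ hx0
  have hlt := hU x hx (by rintro rfl; simp at hx0)
  have hε : 0 < ε := pos_of_mul_pos_left ((norm_nonneg _).trans_lt hlt) (norm_nonneg x)
  calc ‖toEuclideanLin M' (G x)‖ ≤ ‖toEuclideanLin M x‖ := hM'G x
    _ < ε * ‖x‖ := hlt
    _ ≤ ε * ‖G x‖ := by gcongr; exact hG x

lemma isUnit_of_eigenvalues_ne_zero (h : ∀ i, hM.eigenvalues i ≠ 0) : IsUnit M := by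
  rw [isUnit_iff_isUnit_det, hM.det_eq_prod_eigenvalues, isUnit_iff_ne_zero,
    Finset.prod_ne_zero_iff]
  exact fun i _ => RCLike.ofReal_ne_zero.2 (h i)

end Matrix.IsHermitian

namespace Matrix

lemma fromBlocks_mul_fromRows_one_neg_inv_mul {R l m n : Type*} [CommRing R] [Fintype l] [Fintype n]
    [DecidableEq l] [DecidableEq n] (A : Matrix m l R) (B : Matrix m n R) (C : Matrix n l R)
    (D : Matrix n n R) (hD : IsUnit D) :
    fromBlocks A B C D * fromRows (1 : Matrix l l R) (-(D⁻¹ * C)) =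
      fromRows (A - B * D⁻¹ * C) 0 := by
  rw [fromBlocks_mul_fromRows, Matrix.mul_one, Matrix.mul_one, Matrix.mul_neg, Matrix.mul_neg,
    mul_nonsing_inv_cancel_left _ _ ((isUnit_iff_isUnit_det D).1 hD), Matrix.mul_assoc,
    sub_eq_add_neg, add_neg_cancel]

lemma norm_toEuclideanLin_fromRows_sq {𝕜 m₁ m₂ n : Type*} [RCLike 𝕜] [Fintype m₁] [Fintype m₂]
    [Fintype n] [DecidableEq n] (P : Matrix m₁ n 𝕜) (Q : Matrix m₂ n 𝕜) (x : EuclideanSpace 𝕜 n) :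
    ‖toEuclideanLin (fromRows P Q) x‖ ^ 2 =
      ‖toEuclideanLin P x‖ ^ 2 + ‖toEuclideanLin Q x‖ ^ 2 := by
  simp [EuclideanSpace.norm_sq_eq, Fintype.sum_sum_type, toLpLin_apply]

lemma norm_le_norm_toEuclideanLin_fromRows_one {𝕜 l n : Type*} [RCLike 𝕜] [Fintype l]
    [Fintype n] [DecidableEq n] (T : Matrix l n 𝕜) (x : EuclideanSpace 𝕜 n) :
    ‖x‖ ≤ ‖toEuclideanLin (fromRows (1 : Matrix n n 𝕜) T) x‖ := by
  refine le_of_pow_le_pow_left₀ two_ne_zero (norm_nonneg _) ?_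
  rw [norm_toEuclideanLin_fromRows_sq, toLpLin_one, LinearMap.id_apply]
  exact le_add_of_nonneg_right (sq_nonneg _)

end Matrix

theorem stmt11_general {k m : ℕ} (A : Matrix (Fin k) (Fin k) ℂ) (B : Matrix (Fin m) (Fin m) ℂ)
    (V : Matrix (Fin k) (Fin m) ℂ) (hA : A.IsHermitian) (hB : B.IsHermitian)
    (ε : ℝ) (hε : 0 < ε)
    (hgap : eigCountIoo B (-(2 * ε)) (2 * ε) = 0) :
    IsUnit B ∧
      eigCountIoo (A - V * B⁻¹ * Vᴴ) (-ε) ε ≤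
        eigCountIoo (Matrix.fromBlocks A V Vᴴ B) (-ε) ε := by
  rw [eigCountIoo, dif_pos hB, Finite.card_eq_zero_iff] at hgap
  have hBunit : IsUnit B := hB.isUnit_of_eigenvalues_ne_zero fun i hi =>
    hgap.false ⟨i, by rw [hi]; constructor <;> linarith⟩
  refine ⟨hBunit, ?_⟩
  have hS : (A - V * B⁻¹ * Vᴴ).IsHermitian := hA.sub (isHermitian_mul_mul_conjTranspose V hB.inv)
  have hD : (fromBlocks A V Vᴴ B).IsHermitian := hA.fromBlocks rfl hB
  rw [eigCountIoo, dif_pos hS, eigCountIoo, dif_pos hD, Nat.card_eq_fintype_card,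
    Nat.card_eq_fintype_card]
  refine hS.card_eigenvalues_mem_Ioo_le_of_norm_le hD _
    (norm_le_norm_toEuclideanLin_fromRows_one (-(B⁻¹ * Vᴴ))) fun x => ?_
  rw [← LinearMap.comp_apply, ← toLpLin_mul_same,
    fromBlocks_mul_fromRows_one_neg_inv_mul _ _ _ _ hBunit]
  refine (sq_le_sq₀ (norm_nonneg _) (norm_nonneg _)).1 ?_
  simp [norm_toEuclideanLin_fromRows_sq]

theorem stmt11 {k m : ℕ} (A : Matrix (Fin k) (Fin k) ℂ) (B : Matrix (Fin m) (Fin m) ℂ)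
    (V : Matrix (Fin k) (Fin m) ℂ) (hA : A.IsHermitian) (hB : B.IsHermitian)
    (hV : matNorm V ≤ 1 / 2) (ε : ℝ) (hε : 0 < ε)
    (hgap : eigCountIoo B (-(2 * ε)) (2 * ε) = 0) :
    IsUnit B ∧
      eigCountIoo (A - V * B⁻¹ * Vᴴ) (-ε) ε ≤
        eigCountIoo (Matrix.fromBlocks A V Vᴴ B) (-ε) ε :=
  stmt11_general A B V hA hB ε hε hgap
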